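/- Let G, H be finite digraphs, ξ ∈ H(G,H) a homomorphism, and T(ξ) the transitive hull of G_ξ. If H is transitive, then H(T(ξ), H) = H(G_ξ, H). If H is transitive and antisymmetric, then S(T(ξ), H) = S(G_ξ, H). Furthermore, if G and H are both finite posets, then T(ξ) is a finite poset; and if G and H are both finite irreflexive antisymmetric transitive digraphs, then so is T(ξ). -/

import Mathlib

/-- A homomorphism between digraphs `(V, A)` and `(W, B)`:
a map sending every arc to an arc. -/
def IsHom {V W : Type} (A : V → V → Prop) (B : W → W → Prop) (f : V → W) : Prop :=
  ∀ ⦃v w : V⦄, A v w → B (f v) (f w)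

/-- A strict homomorphism: a homomorphism mapping proper arcs to proper arcs. -/
def IsStrictHom {V W : Type} (A : V → V → Prop) (B : W → W → Prop) (f : V → W) : Prop :=
  IsHom A B f ∧ ∀ ⦃v w : V⦄, A v w → v ≠ w → f v ≠ f w

/-- Adjacency in a digraph. -/
def DAdj {V : Type} (A : V → V → Prop) (v w : V) : Prop := A v w ∨ A w v

/-- `v` and `w` are connected in `X`: `v = w` (with `v ∈ X`), or there is a line
`z 0, …, z I` inside `X` connecting them, consecutive members being adjacent. -/
def ConnIn {V : Type} (A : V → V → Prop) (X : Set V) (v w : V) : Prop :=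
  ∃ (I : ℕ) (z : ℕ → V), z 0 = v ∧ z I = w ∧ (∀ i ≤ I, z i ∈ X) ∧
    ∀ i < I, DAdj A (z i) (z (i + 1))

/-- `γ_X(v)`: the set of `w ∈ X` connected with `v` in `X`. -/
def gammaSet {V : Type} (A : V → V → Prop) (X : Set V) (v : V) : Set V :=
  {w | ConnIn A X v w}

/-- `Γ_ξ(v)`: the connectivity component of `v` in the preimage `ξ⁻¹(ξ(v))`. -/
def GammaComp {V W : Type} (A : V → V → Prop) (ξ : V → W) (v : V) : Set V :=
  gammaSet A {u | ξ u = ξ v} v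

/-- The set of homomorphisms `H(G,H)` (as a type). -/
def HomSet {V W : Type} (A : V → V → Prop) (B : W → W → Prop) : Type :=
  {f : V → W // IsHom A B f}

/-- The set of strict homomorphisms `S(G,H)` (as a type). -/
def StrictHomSet {V W : Type} (A : V → V → Prop) (B : W → W → Prop) : Type :=
  {f : V → W // IsStrictHom A B f}

/-- The vertex set of the digraph `G_ξ`: the components `Γ_ξ(v)`, `v ∈ V(G)`. -/
def GVert {V W : Type} (A : V → V → Prop) (ξ : V → W) : Type :=
  {C : Set V // ∃ v, C = GammaComp A ξ v}

/-- The arc relation of the digraph `G_ξ`. -/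
def GArc {V W : Type} (A : V → V → Prop) (ξ : V → W) :
    GVert A ξ → GVert A ξ → Prop :=
  fun C D => ∃ a ∈ C.1, ∃ b ∈ D.1, A a b

/-- The canonical map `π_ξ : G → G_ξ`, `v ↦ Γ_ξ(v)`. -/
def piMap {V W : Type} (A : V → V → Prop) (ξ : V → W) (v : V) : GVert A ξ :=
  ⟨GammaComp A ξ v, v, rfl⟩

/-- `Θ_{G,H'}(ξ)`: the homomorphisms `ζ : G → H'` with `G_ζ = G_ξ`
(equality of the digraphs `G_ζ` and `G_ξ`, i.e. of their vertex sets,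
which determines the arc sets). -/
def ThetaSet {V W W' : Type} (A : V → V → Prop) (B' : W' → W' → Prop)
    (ξ : V → W) : Set (V → W') :=
  {ζ | IsHom A B' ζ ∧
    {C : Set V | ∃ v, C = GammaComp A ζ v} = {C : Set V | ∃ v, C = GammaComp A ξ v}}

/-- `R ⊑_Γ S` with respect to a class `D'` of finite digraphs: a strong Γ-scheme
from `R` to `S` exists, i.e. for every finite digraph `G ∈ D'` an injective map
`ρ_G : H(G,R) → H(G,S)` with `Γ_{ρ_G(ξ)}(v) = Γ_ξ(v)` for all `ξ`, `v`. -/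
def SqGamma (D' : (V : Type) → (V → V → Prop) → Prop)
    {VR VS : Type} (R : VR → VR → Prop) (S : VS → VS → Prop) : Prop :=
  ∀ (V : Type) [Finite V] [Nonempty V] (A : V → V → Prop), D' V A →
    ∃ ρ : HomSet A R → HomSet A S, Function.Injective ρ ∧
      ∀ (ξ : HomSet A R) (v : V), GammaComp A (ρ ξ).1 v = GammaComp A ξ.1 v

/-- The class `T_a`: digraphs whose loop-removed digraph is acyclic,
i.e. every closed walk is trivial. -/
def Ta {V : Type} (A : V → V → Prop) : Prop :=
  ∀ (z : ℕ → V) (I : ℕ), 0 < I →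
    (∀ i < I, A (z i) (z (i + 1)) ∧ z i ≠ z (i + 1)) → z 0 ≠ z I

/-- A poset: a reflexive, antisymmetric, transitive digraph. -/
def IsPosetRel {V : Type} (A : V → V → Prop) : Prop :=
  Reflexive A ∧ AntiSymmetric A ∧ Transitive A

/-- An element of `P^*`: an irreflexive, antisymmetric, transitive digraph. -/
def IsStrictPosetRel {V : Type} (A : V → V → Prop) : Prop :=
  Irreflexive A ∧ AntiSymmetric A ∧ Transitive A

/-- The direct (disjoint) sum of two digraphs. -/
def sumRel {V W : Type} (A : V → V → Prop) (B : W → W → Prop) :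
    V ⊕ W → V ⊕ W → Prop
  | Sum.inl v, Sum.inl w => A v w
  | Sum.inr v, Sum.inr w => B v w
  | _, _ => False

/-- The open neighborhood `N(v)`. -/
def Nbr {Z : Type} (A : Z → Z → Prop) (v : Z) : Set Z :=
  {w | w ≠ v ∧ (A v w ∨ A w v)}

/-- The in-neighborhood `N^in(v)`. -/
def NIn {Z : Type} (A : Z → Z → Prop) (v : Z) : Set Z :=
  {w | w ≠ v ∧ A w v}

/-- The out-neighborhood `N^out(v)`. -/
def NOut {Z : Type} (A : Z → Z → Prop) (v : Z) : Set Z :=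
  {w | w ≠ v ∧ A v w}

/-- `A_r`: the arcs of `R` minus all arcs between `M` and `X`. -/
def ArRel {Z : Type} (A : Z → Z → Prop) (X M : Set Z) : Z → Z → Prop :=
  fun v w => A v w ∧ ¬(v ∈ M ∧ w ∈ X) ∧ ¬(v ∈ X ∧ w ∈ M)

/-- `A_d = { m β(x) : m x ∈ A(R) ∩ (M × X) }`. -/
def AdRel {Z : Type} (A : Z → Z → Prop) (X M : Set Z) (β : Z → Z) : Z → Z → Prop :=
  fun v w => v ∈ M ∧ ∃ x ∈ X, A v x ∧ w = β x

/-- `A_u = { β(x) m : x m ∈ A(R) ∩ (X × M) }`. -/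
def AuRel {Z : Type} (A : Z → Z → Prop) (X M : Set Z) (β : Z → Z) : Z → Z → Prop :=
  fun v w => w ∈ M ∧ ∃ x ∈ X, A x w ∧ v = β x

/-- The rearranged digraph `S`, with `A(S) = A_r ∪ A_d ∪ A_u`. -/
def SRel {Z : Type} (A : Z → Z → Prop) (X M : Set Z) (β : Z → Z) : Z → Z → Prop :=
  fun v w => ArRel A X M v w ∨ AdRel A X M β v w ∨ AuRel A X M β v w

/-- `U_ξ = { v : ξ(v) ∈ T and ξ[N_G(v)] ∩ M ≠ ∅ }` (for `T = X`; with `T = Y`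
this gives `U'_ζ`). -/
def USet {V Z : Type} (AG : V → V → Prop) (T M : Set Z) (ξ : V → Z) : Set V :=
  {v | ξ v ∈ T ∧ ∃ w ∈ Nbr AG v, ξ w ∈ M}

open Classical in
/-- The rearranged homomorphism `ρ_G(ξ)`: `β(ξ(v))` on `U_ξ` and `ξ(v)` elsewhere. -/
noncomputable def rhoMap {V Z : Type} (AG : V → V → Prop) (X M : Set Z) (β : Z → Z)
    (ξ : V → Z) : V → Z :=
  fun v => if v ∈ USet AG X M ξ then β (ξ v) else ξ v

/-!
Since `ξ` is constant on each component `Γ_ξ(v)`, it factors through `G_ξ` as a strict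
homomorphism `G_ξ → H`. In a transitive digraph a homomorphism extends along paths, so it is
already a homomorphism of the transitive hull; if moreover `H` is antisymmetric, every path of
`G_ξ` whose ends have equal images is mapped to a single vertex, and strictness forces the path
to stay at one vertex. Applied to the factorisation of `ξ`, this gives antisymmetry (and, for
irreflexive `H`, irreflexivity) of `T(ξ)`.
-/

open Relation

section TransitiveHull

variable {V W : Type} {A : V → V → Prop} {B : W → W → Prop} {f : V → W}

theorem IsHom.transGen (hB : Transitive B) (hf : IsHom A B f) : IsHom (TransGen A) B f := by
  intro v w h
  induction h with
  | single h => exact hf h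
  | tail _ h ih => exact hB ih (hf h)

theorem isHom_transGen_iff (hB : Transitive B) : IsHom (TransGen A) B f ↔ IsHom A B f :=
  ⟨fun hf _ _ h => hf (.single h), IsHom.transGen hB⟩

theorem IsStrictHom.eq_of_transGen (hB : Transitive B) (hB' : AntiSymmetric B)
    (hf : IsStrictHom A B f) {v w : V} (h : TransGen A v w) (hvw : f v = f w) : v = w := by
  have hs : ∀ ⦃a b⦄, A a b → f a = f b → a = b := fun a b hab => not_imp_not.1 (hf.2 hab)
  induction h with
  | single h => exact hs h hvw
  | @tail u w hvu huw ih =>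
    have hfu : f u = f w := hB' (hf.1 huw) (hvw ▸ hf.1.transGen hB hvu)
    exact (ih (hvw.trans hfu.symm)).trans (hs huw hfu)

theorem isStrictHom_transGen_iff (hB : Transitive B) (hB' : AntiSymmetric B) :
    IsStrictHom (TransGen A) B f ↔ IsStrictHom A B f :=
  ⟨fun hf => ⟨fun _ _ h => hf.1 (.single h), fun _ _ h => hf.2 (.single h)⟩,
    fun hf => ⟨hf.1.transGen hB, fun _ _ h hne hfe => hne (hf.eq_of_transGen hB hB' h hfe)⟩⟩

theorem IsStrictHom.antiSymmetric_transGen (hB : Transitive B) (hB' : AntiSymmetric B)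
    (hf : IsStrictHom A B f) : AntiSymmetric (TransGen A) := fun _ _ hvw hwv =>
  hf.eq_of_transGen hB hB' hvw (hB' (hf.1.transGen hB hvw) (hf.1.transGen hB hwv))

theorem IsHom.irreflexive_transGen (hB : Transitive B) (hB' : Irreflexive B) (hf : IsHom A B f) :
    Irreflexive (TransGen A) := fun v h => hB' (f v) (hf.transGen hB h)

end TransitiveHull

section Components

variable {V W : Type} {A : V → V → Prop} {B : W → W → Prop} {ξ : V → W}

def AdjIn (A : V → V → Prop) (X : Set V) (a b : V) : Prop :=
  a ∈ X ∧ b ∈ X ∧ DAdj A a b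

instance (X : Set V) : Std.Symm (AdjIn A X) where
  symm _ _ := fun ⟨ha, hb, hab⟩ => ⟨hb, ha, hab.symm⟩

theorem connIn_iff {X : Set V} {v w : V} :
    ConnIn A X v w ↔ v ∈ X ∧ ReflTransGen (AdjIn A X) v w := by
  constructor
  · rintro ⟨I, z, rfl, rfl, hX, hadj⟩
    refine ⟨hX 0 I.zero_le, ?_⟩
    induction I with
    | zero => rfl
    | succ n ih =>
      exact (ih (fun i hi => hX i (by omega)) (fun i hi => hadj i (by omega))).tail
        ⟨hX n (by omega), hX (n + 1) le_rfl, hadj n (by omega)⟩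
  · rintro ⟨hv, h⟩
    induction h with
    | refl => exact ⟨0, fun _ => v, rfl, rfl, fun _ _ => hv, fun i hi => absurd hi i.not_lt_zero⟩
    | @tail b c _ hbc ih =>
      obtain ⟨I, z, h0, rfl, hX, hadj⟩ := ih
      refine ⟨I + 1, fun i => if i ≤ I then z i else c, by simpa using h0, by simp, ?_, ?_⟩
      · intro i hi
        by_cases hiI : i ≤ I
        · simpa [hiI] using hX i hiI
        · simpa [hiI] using hbc.2.1
      · intro i hi
        by_cases hiI : i + 1 ≤ I
        · simpa [hiI, show i ≤ I by omega] using hadj i hiI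
        · simpa [hiI, show i = I by omega] using hbc.2.2

theorem apply_eq_of_mem_gammaComp {v w : V} (h : w ∈ GammaComp A ξ v) : ξ w = ξ v := by
  obtain ⟨I, z, -, rfl, hX, -⟩ := h
  exact hX I le_rfl

theorem mem_gammaComp_iff {v w : V} :
    w ∈ GammaComp A ξ v ↔ ReflTransGen (AdjIn A {u | ξ u = ξ v}) v w :=
  connIn_iff.trans (and_iff_right rfl)

theorem gammaComp_eq_of_mem {v w : V} (h : w ∈ GammaComp A ξ v) :
    GammaComp A ξ w = GammaComp A ξ v := by
  have hfib : {u | ξ u = ξ w} = {u | ξ u = ξ v} := by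
    simp only [apply_eq_of_mem_gammaComp h]
  have hvw := mem_gammaComp_iff.1 h
  ext u
  simp only [mem_gammaComp_iff, hfib]
  exact ⟨hvw.trans, (symm hvw).trans⟩

theorem mem_gammaComp_of_dAdj {a b : V} (hab : DAdj A a b) (hξ : ξ b = ξ a) :
    b ∈ GammaComp A ξ a :=
  mem_gammaComp_iff.2 (.single ⟨rfl, hξ, hab⟩)

theorem reflexive_gArc (hA : Reflexive A) : Reflexive (GArc A ξ) := by
  rintro ⟨_, v, rfl⟩
  have hv : v ∈ GammaComp A ξ v := mem_gammaComp_iff.2 .refl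
  exact ⟨v, hv, v, hv, hA v⟩

/-- `ξ` is constant on each component; this is the induced map `G_ξ → H`. -/
noncomputable def GVert.value (C : GVert A ξ) : W :=
  ξ C.2.choose

theorem GVert.value_eq {C : GVert A ξ} {a : V} (ha : a ∈ C.1) : C.value = ξ a :=
  (apply_eq_of_mem_gammaComp (C.2.choose_spec ▸ ha)).symm

theorem GVert.isStrictHom_value (hξ : IsHom A B ξ) :
    IsStrictHom (GArc A ξ) B (@GVert.value _ _ A ξ) := by
  refine ⟨?_, ?_⟩
  · rintro C D ⟨a, ha, b, hb, hab⟩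
    rw [GVert.value_eq ha, GVert.value_eq hb]
    exact hξ hab
  · rintro ⟨_, v, rfl⟩ ⟨_, w, rfl⟩ ⟨a, ha, b, hb, hab⟩ hne heq
    rw [GVert.value_eq ha, GVert.value_eq hb] at heq
    refine hne (Subtype.ext ?_)
    calc GammaComp A ξ v = GammaComp A ξ a := (gammaComp_eq_of_mem ha).symm
      _ = GammaComp A ξ b := (gammaComp_eq_of_mem (mem_gammaComp_of_dAdj (.inl hab) heq.symm)).symm
      _ = GammaComp A ξ w := gammaComp_eq_of_mem hb

end Components

theorem stmt8_general {V W : Type}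
    (A : V → V → Prop) (B : W → W → Prop) (ξ : V → W) (hξ : IsHom A B ξ) :
    (Transitive B →
      {f : GVert A ξ → W | IsHom (Relation.TransGen (GArc A ξ)) B f} =
        {f : GVert A ξ → W | IsHom (GArc A ξ) B f}) ∧
    (Transitive B → AntiSymmetric B →
      {f : GVert A ξ → W | IsStrictHom (Relation.TransGen (GArc A ξ)) B f} =
        {f : GVert A ξ → W | IsStrictHom (GArc A ξ) B f}) ∧
    (IsPosetRel A → IsPosetRel B → IsPosetRel (Relation.TransGen (GArc A ξ))) ∧
    (IsStrictPosetRel A → IsStrictPosetRel B →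
      IsStrictPosetRel (Relation.TransGen (GArc A ξ))) := by
  have hval := GVert.isStrictHom_value hξ
  have htrans : Transitive (TransGen (GArc A ξ)) := fun _ _ _ => TransGen.trans
  refine ⟨fun hB => Set.ext fun _ => isHom_transGen_iff hB,
    fun hB hB' => Set.ext fun _ => isStrictHom_transGen_iff hB hB', ?_, ?_⟩
  · rintro ⟨hA, -, -⟩ ⟨-, hB', hB⟩
    exact ⟨fun C => .single (reflexive_gArc hA C), hval.antiSymmetric_transGen hB hB', htrans⟩
  · rintro - ⟨hBirr, hB', hB⟩
    exact ⟨hval.1.irreflexive_transGen hB hBirr, hval.antiSymmetric_transGen hB hB', htrans⟩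

/-- For a homomorphism `ξ : G → H` and the transitive hull `T(ξ)` of `G_ξ`:
if `H` is transitive, then `H(T(ξ),H) = H(G_ξ,H)`; if `H` is moreover
antisymmetric, then `S(T(ξ),H) = S(G_ξ,H)`; if `G` and `H` are finite posets,
then `T(ξ)` is a finite poset; and if `G` and `H` are finite irreflexive
antisymmetric transitive digraphs, then so is `T(ξ)`. -/
theorem stmt8 {V W : Type} [Finite V] [Nonempty V] [Finite W] [Nonempty W]
    (A : V → V → Prop) (B : W → W → Prop) (ξ : V → W) (hξ : IsHom A B ξ) :
    (Transitive B →
      {f : GVert A ξ → W | IsHom (Relation.TransGen (GArc A ξ)) B f} =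
        {f : GVert A ξ → W | IsHom (GArc A ξ) B f}) ∧
    (Transitive B → AntiSymmetric B →
      {f : GVert A ξ → W | IsStrictHom (Relation.TransGen (GArc A ξ)) B f} =
        {f : GVert A ξ → W | IsStrictHom (GArc A ξ) B f}) ∧
    (IsPosetRel A → IsPosetRel B → IsPosetRel (Relation.TransGen (GArc A ξ))) ∧
    (IsStrictPosetRel A → IsStrictPosetRel B →
      IsStrictPosetRel (Relation.TransGen (GArc A ξ))) :=
  stmt8_general A B ξ hξ
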